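/- arXiv:2504.07896 — 2 statements merged into one kernel-verified Lean document; each statement's English description precedes it below -/
import Mathlib

section
/- (FB stationarity implies projected successor measure.) Suppose F_z ∈ ℝ^{d×(S×A)} and B ∈ ℝ^{d×S} satisfy the stationarity condition F_z^⊤ B D_ρ B^⊤ = P B^⊤ + γ P^{π_z} F_z^⊤ B D_ρ B^⊤, and B D_ρ B^⊤ is invertible. Then F_z^⊤ = M^{π_z} B^⊤ (B D_ρ B^⊤)^{-1}, and consequently F_z^⊤ B D_ρ = M^{π_z} Π_B, where Π_B = B^⊤ (B D_ρ B^⊤)^{-1} B D_ρ. -/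
open Matrix

/-- FB stationarity implies projected successor measure:
if `F_z^⊤ B D_ρ B^⊤ = P B^⊤ + γ P^{π_z} F_z^⊤ B D_ρ B^⊤` with `B D_ρ B^⊤`
invertible, then `F_z^⊤ = M^{π_z} B^⊤ (B D_ρ B^⊤)⁻¹` and
`F_z^⊤ B D_ρ = M^{π_z} Π_B`. -/
theorem fb_stationarity_projected_successor_measure
    {S A : Type*} {d : ℕ} [Fintype S] [Fintype A] [DecidableEq S] [DecidableEq A]
    (γ : ℝ) (hγ : γ ∈ Set.Ioo (0 : ℝ) 1)
    (P : Matrix (S × A) S ℝ) (Pπ : Matrix (S × A) (S × A) ℝ)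
    (hPπinv : IsUnit (1 - γ • Pπ).det)
    (M : Matrix (S × A) S ℝ) (hM : M = (1 - γ • Pπ)⁻¹ * P)
    (F : Matrix (Fin d) (S × A) ℝ) (B : Matrix (Fin d) S ℝ)
    (ρ : S → ℝ) (hρ : ∀ s, 0 < ρ s)
    (hG : IsUnit (B * Matrix.diagonal ρ * B.transpose).det)
    (hstat : F.transpose * B * Matrix.diagonal ρ * B.transpose =
      P * B.transpose +
        γ • (Pπ * (F.transpose * B * Matrix.diagonal ρ * B.transpose)))
    (PB : Matrix S S ℝ)
    (hPB : PB = B.transpose * (B * Matrix.diagonal ρ * B.transpose)⁻¹ *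
      B * Matrix.diagonal ρ) :
    F.transpose = M * B.transpose * (B * Matrix.diagonal ρ * B.transpose)⁻¹ ∧
      F.transpose * B * Matrix.diagonal ρ = M * PB := by
  set G := B * Matrix.diagonal ρ * B.transpose with hGdef
  have h : F.transpose * G = F.transpose * B * Matrix.diagonal ρ * B.transpose := by
    rw [hGdef, ← Matrix.mul_assoc, ← Matrix.mul_assoc]
  have key : (1 - γ • Pπ) * (F.transpose * G) = P * B.transpose := by
    rw [h, Matrix.sub_mul, Matrix.one_mul, Matrix.smul_mul]
    nth_rewrite 1 [hstat]
    abel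
  have hFG : F.transpose * G = M * B.transpose := by
    rw [hM, Matrix.mul_assoc]
    calc F.transpose * G = (1 - γ • Pπ)⁻¹ * ((1 - γ • Pπ) * (F.transpose * G)) := by
          conv_rhs => rw [← Matrix.mul_assoc, Matrix.nonsing_inv_mul _ hPπinv, Matrix.one_mul]
      _ = (1 - γ • Pπ)⁻¹ * (P * B.transpose) := by rw [key]
  have h1 : F.transpose = M * B.transpose * G⁻¹ := by
    calc F.transpose = F.transpose * G * G⁻¹ := by
          rw [Matrix.mul_assoc, Matrix.mul_nonsing_inv _ hG, Matrix.mul_one]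
      _ = M * B.transpose * G⁻¹ := by rw [hFG]
  refine ⟨h1, ?_⟩
  rw [hPB]
  calc F.transpose * B * Matrix.diagonal ρ
      = M * B.transpose * G⁻¹ * B * Matrix.diagonal ρ := by rw [h1]
    _ = M * (B.transpose * G⁻¹ * B * Matrix.diagonal ρ) := by
        simp only [Matrix.mul_assoc]
end

section
/- (FB residual decomposition.) Under the FB stationarity condition F_z^⊤ B D_ρ = M^{π_z} Π_B with Π_B = B^⊤(B D_ρ B^⊤)^{-1} B D_ρ invertible Gram matrix, for any reward r ∈ ℝ^S: Q^{π_z}_r = F_z^⊤ z_r + (M^{π_z} − F_z^⊤ B D_ρ)(r − Π_B r), where z_r = B D_ρ r. That is, the residual Q-term equals the successor-measure approximation error applied to the reward embedding error. -/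
open Matrix

/-- FB residual decomposition: under `F_z^⊤ B D_ρ = M^{π_z} Π_B`,
for any reward `r`: `Q^{π_z}_r = F_z^⊤ z_r + (M^{π_z} - F_z^⊤ B D_ρ)(r - Π_B r)`
with `z_r = B D_ρ r`. -/
theorem fb_residual_decomposition
    {S A : Type*} {d : ℕ} [Fintype S] [Fintype A] [DecidableEq S]
    (M : Matrix (S × A) S ℝ)
    (F : Matrix (Fin d) (S × A) ℝ) (B : Matrix (Fin d) S ℝ)
    (ρ : S → ℝ) (hρ : ∀ s, 0 < ρ s)
    (hG : IsUnit (B * Matrix.diagonal ρ * B.transpose).det)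
    (PB : Matrix S S ℝ)
    (hPB : PB = B.transpose * (B * Matrix.diagonal ρ * B.transpose)⁻¹ *
      B * Matrix.diagonal ρ)
    (hstat : F.transpose * B * Matrix.diagonal ρ = M * PB)
    (r : S → ℝ) (zr : Fin d → ℝ)
    (hzr : zr = (B * Matrix.diagonal ρ) *ᵥ r) :
    M *ᵥ r =
      F.transpose *ᵥ zr +
        (M - F.transpose * B * Matrix.diagonal ρ) *ᵥ (r - PB *ᵥ r) := by
  have hidem : PB * PB = PB := by
    rw [hPB]
    have h1 : B.transpose * (B * Matrix.diagonal ρ * B.transpose)⁻¹ * B *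
        Matrix.diagonal ρ * (B.transpose * (B * Matrix.diagonal ρ * B.transpose)⁻¹)
        = B.transpose * (B * Matrix.diagonal ρ * B.transpose)⁻¹ := by
      have := Matrix.mul_nonsing_inv _ hG
      calc B.transpose * (B * Matrix.diagonal ρ * B.transpose)⁻¹ * B *
          Matrix.diagonal ρ * (B.transpose * (B * Matrix.diagonal ρ * B.transpose)⁻¹)
          = B.transpose * (B * Matrix.diagonal ρ * B.transpose)⁻¹ *
            (B * Matrix.diagonal ρ * B.transpose *
              (B * Matrix.diagonal ρ * B.transpose)⁻¹) := by
            simp only [Matrix.mul_assoc]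
        _ = _ := by rw [this, Matrix.mul_one]
    calc B.transpose * (B * Matrix.diagonal ρ * B.transpose)⁻¹ * B * Matrix.diagonal ρ *
        (B.transpose * (B * Matrix.diagonal ρ * B.transpose)⁻¹ * B * Matrix.diagonal ρ)
        = (B.transpose * (B * Matrix.diagonal ρ * B.transpose)⁻¹ * B * Matrix.diagonal ρ *
          (B.transpose * (B * Matrix.diagonal ρ * B.transpose)⁻¹)) * B *
            Matrix.diagonal ρ := by simp only [Matrix.mul_assoc]
      _ = _ := by rw [h1]
  have hFB : F.transpose * (B * Matrix.diagonal ρ) = M * PB := by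
    rw [← Matrix.mul_assoc]; exact hstat
  have h2 : F.transpose *ᵥ zr = (M * PB) *ᵥ r := by
    rw [hzr, Matrix.mulVec_mulVec, hFB]
  have h3 : (M * PB) *ᵥ (PB *ᵥ r) = (M * PB) *ᵥ r := by
    rw [Matrix.mulVec_mulVec, Matrix.mul_assoc, hidem]
  rw [h2, hstat, Matrix.mulVec_sub, Matrix.sub_mulVec, Matrix.sub_mulVec, h3]
  rw [Matrix.mulVec_mulVec]
  abel
end
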